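/- arXiv:2604.08495 — 2 statements merged into one kernel-verified Lean document; each statement's English description precedes it below -/
import Mathlib

section
/- Let (a_k) be a sequence of nonnegative reals satisfying a_{k+1} ≤ (1 - c/(k+1)) a_k + C/(k+1)² for all k ≥ k_0, with constants c > 1 and C > 0. Then a_k ≤ C/((c-1)k) + o(1/k); in particular k·a_k is bounded and a_k → 0. -/
open Filter

theorem chung_lemma (a : ℕ → ℝ) (c C : ℝ) (k0 : ℕ)
    (ha : ∀ k, 0 ≤ a k) (hc : 1 < c) (hC : 0 < C)
    (hrec : ∀ k, k0 ≤ k →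
      a (k + 1) ≤ (1 - c / (k + 1)) * a k + C / (k + 1) ^ 2) :
    (∃ e : ℕ → ℝ, (∀ k, 0 < k → a k ≤ C / ((c - 1) * k) + e k) ∧
        Tendsto (fun k : ℕ => (k : ℝ) * e k) atTop (nhds 0)) ∧
    (∃ K : ℝ, ∀ k : ℕ, (k : ℝ) * a k ≤ K) ∧
    Tendsto a atTop (nhds 0) := by
  set d := c - 1 with hd
  have hd0 : 0 < d := by simp [hd]; linarith
  set b : ℕ → ℝ := fun k => (k : ℝ) * a k with hbdef
  have hb0 : ∀ k, 0 ≤ b k := fun k => mul_nonneg (Nat.cast_nonneg k) (ha k)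
  set N : ℕ := max k0 ⌈c⌉₊ with hNdef
  have hNk0 : k0 ≤ N := le_max_left _ _
  have hNc : c ≤ (N : ℝ) := le_trans (Nat.le_ceil c) (by exact_mod_cast le_max_right k0 ⌈c⌉₊)
  have hN1 : (1 : ℝ) < N := lt_of_lt_of_le hc hNc
  -- key recurrence for b
  have hkey : ∀ k, N ≤ k → b (k + 1) ≤ (1 - d / k) * b k + C / (k + 1) := by
    intro k hk
    have hkR : (N : ℝ) ≤ k := Nat.cast_le.mpr hk
    have hk0 : (0 : ℝ) < k := by linarith
    have hk10 : (0 : ℝ) < (k : ℝ) + 1 := by linarith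
    have h1 := hrec k (le_trans hNk0 hk)
    have h2 : ((k : ℝ) + 1) * a (k + 1) ≤ ((k : ℝ) + 1) * ((1 - c / (k + 1)) * a k + C / (k + 1) ^ 2) :=
      mul_le_mul_of_nonneg_left h1 (le_of_lt hk10)
    have h3 : ((k : ℝ) + 1) * ((1 - c / (k + 1)) * a k + C / (k + 1) ^ 2)
        = ((k : ℝ) + 1 - c) * a k + C / (k + 1) := by
      field_simp
    have h4 : (1 - d / k) * b k = ((k : ℝ) + 1 - c) * a k := by
      simp only [hbdef, hd]
      field_simp
      ring
    have hb1 : b (k + 1) = ((k : ℝ) + 1) * a (k + 1) := by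
      simp [hbdef]
    rw [hb1, h4]
    calc ((k : ℝ) + 1) * a (k + 1) ≤ ((k : ℝ) + 1) * ((1 - c / (k + 1)) * a k + C / (k + 1) ^ 2) := h2
      _ = ((k : ℝ) + 1 - c) * a k + C / (k + 1) := h3
      _ ≤ ((k : ℝ) + 1 - c) * a k + C / (k + 1) := le_refl _
  -- absorbing
  have habs : ∀ ε : ℝ, 0 < ε → ∀ k, N ≤ k → b k ≤ C / d + ε → b (k + 1) ≤ C / d + ε := by
    intro ε hε k hk hbk
    have hkR : (N : ℝ) ≤ k := Nat.cast_le.mpr hk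
    have hk0 : (0 : ℝ) < k := by linarith
    have hdk : d / k ≤ 1 := by
      rw [div_le_one hk0]
      simp only [hd]; linarith
    have h1 : b (k + 1) ≤ (1 - d / k) * b k + C / (k + 1) := hkey k hk
    have h2 : (1 - d / k) * b k ≤ (1 - d / k) * (C / d + ε) :=
      mul_le_mul_of_nonneg_left hbk (by linarith)
    have h3 : (d / k) * (C / d + ε) = C / k + d * ε / k := by
      field_simp
    have h4 : C / ((k : ℝ) + 1) ≤ C / k := by
      apply div_le_div_of_nonneg_left (le_of_lt hC) hk0 (by linarith)
    have h5 : 0 ≤ d * ε / k := by positivity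
    nlinarith [h1, h2]
  -- drop
  have hdrop : ∀ ε : ℝ, 0 < ε → ∀ k, N ≤ k → C / d + ε ≤ b k → b (k + 1) ≤ b k - d * ε / k := by
    intro ε hε k hk hbk
    have hkR : (N : ℝ) ≤ k := Nat.cast_le.mpr hk
    have hk0 : (0 : ℝ) < k := by linarith
    have h1 : b (k + 1) ≤ (1 - d / k) * b k + C / (k + 1) := hkey k hk
    have h2 : (d / k) * (C / d + ε) ≤ (d / k) * b k :=
      mul_le_mul_of_nonneg_left hbk (by positivity)
    have h3 : (d / k) * (C / d + ε) = C / k + d * ε / k := by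
      field_simp
    have h4 : C / ((k : ℝ) + 1) ≤ C / k := by
      apply div_le_div_of_nonneg_left (le_of_lt hC) hk0 (by linarith)
    nlinarith [h1]
  -- hitting
  have hhit : ∀ ε : ℝ, 0 < ε → ∃ k, N ≤ k ∧ b k ≤ C / d + ε := by
    intro ε hε
    by_contra hcon
    push_neg at hcon
    have hlow : ∀ k, N ≤ k → C / d + ε < b k := fun k hk => hcon k hk
    have hind : ∀ n : ℕ, b (N + n) ≤ b N - d * ε * ∑ i ∈ Finset.range n, 1 / ((N : ℝ) + i) := by
      intro n
      induction n with
      | zero => simp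
      | succ n ih =>
        have hkN : N ≤ N + n := Nat.le_add_right _ _
        have h1 := hdrop ε hε (N + n) hkN (le_of_lt (hlow (N + n) hkN))
        push_cast at h1
        rw [Finset.sum_range_succ]
        have h5 : N + (n + 1) = (N + n) + 1 := by ring
        rw [h5]
        have hNn : (0:ℝ) < (N:ℝ) + n := by have := Nat.cast_nonneg (α := ℝ) n; linarith
        have h6 : d * ε / ((N : ℝ) + n) = d * ε * (1 / ((N : ℝ) + n)) := by ring
        rw [h6] at h1
        nlinarith [h1]
    -- divergence
    have hNR : (0 : ℝ) < N := by linarith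
    have hdiv : Tendsto (fun n : ℕ => ∑ i ∈ Finset.range n, 1 / ((N : ℝ) + i)) atTop atTop := by
      apply tendsto_atTop_mono (g := fun n => ∑ i ∈ Finset.range n, 1 / ((N : ℝ) + i))
        (f := fun n => (1 / (N : ℝ)) * ∑ i ∈ Finset.range n, 1 / ((i : ℝ) + 1))
      · intro n
        rw [Finset.mul_sum]
        apply Finset.sum_le_sum
        intro i _
        have hNi : (0:ℝ) < (N:ℝ) + i := by have := Nat.cast_nonneg (α := ℝ) i; linarith
        have hle : (N:ℝ) + i ≤ (N:ℝ) * ((i:ℝ) + 1) := by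
          have := Nat.cast_nonneg (α := ℝ) i
          nlinarith
        calc (1/(N:ℝ)) * (1/((i:ℝ)+1)) = 1/((N:ℝ)*((i:ℝ)+1)) := by
              rw [div_mul_div_comm, one_mul]
          _ ≤ 1/((N:ℝ)+i) := one_div_le_one_div_of_le hNi hle
      · exact Tendsto.const_mul_atTop (by positivity) Real.tendsto_sum_range_one_div_nat_succ_atTop
    have hdiv2 : Tendsto (fun n : ℕ => d * ε * ∑ i ∈ Finset.range n, 1 / ((N : ℝ) + i)) atTop atTop :=
      Tendsto.const_mul_atTop (by positivity) hdiv
    obtain ⟨n, hn⟩ := (hdiv2.eventually_gt_atTop (b N)).exists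
    have := hind n
    have := hb0 (N + n)
    linarith
  -- eventual bound
  have hev : ∀ ε : ℝ, 0 < ε → ∃ K : ℕ, ∀ k, K ≤ k → b k ≤ C / d + ε := by
    intro ε hε
    obtain ⟨k1, hk1N, hk1⟩ := hhit ε hε
    refine ⟨k1, ?_⟩
    intro k hk
    induction k, hk using Nat.le_induction with
    | base => exact hk1
    | succ k hk ih => exact habs ε hε k (le_trans hk1N hk) ih
  constructor
  · -- the e part
    refine ⟨fun k => max (a k - C / ((c - 1) * k)) 0, ?_, ?_⟩
    · intro k hk
      have := le_max_left (a k - C / ((c - 1) * k)) 0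
      linarith
    · rw [Metric.tendsto_atTop]
      intro ε hε
      obtain ⟨K, hK⟩ := hev (ε / 2) (by linarith)
      refine ⟨max K 1, ?_⟩
      intro k hk
      have hkK : K ≤ k := le_trans (le_max_left _ _) hk
      have hk1 : 1 ≤ k := le_trans (le_max_right _ _) hk
      have hk0 : (0 : ℝ) < k := by exact_mod_cast hk1
      have hme : (k : ℝ) * max (a k - C / ((c - 1) * k)) 0
          = max ((k : ℝ) * (a k - C / ((c - 1) * k))) ((k : ℝ) * 0) :=
        mul_max_of_nonneg _ _ (le_of_lt hk0)
      have hval : (k : ℝ) * (a k - C / ((c - 1) * k)) = b k - C / d := by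
        simp only [hbdef, hd]
        field_simp
      have hle : (k : ℝ) * max (a k - C / ((c - 1) * k)) 0 ≤ ε / 2 := by
        rw [hme, hval, mul_zero]
        apply max_le
        · have := hK k hkK; linarith
        · linarith
      have hge : 0 ≤ (k : ℝ) * max (a k - C / ((c - 1) * k)) 0 :=
        mul_nonneg (le_of_lt hk0) (le_max_right _ _)
      rw [Real.dist_eq, sub_zero, abs_of_nonneg hge]
      linarith
  constructor
  · -- boundedness
    obtain ⟨K1, hK1⟩ := hev 1 one_pos
    refine ⟨C / d + 1 + ∑ i ∈ Finset.range K1, b i, ?_⟩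
    intro k
    have hsum0 : 0 ≤ ∑ i ∈ Finset.range K1, b i := Finset.sum_nonneg fun i _ => hb0 i
    rcases lt_or_ge k K1 with h | h
    · have : b k ≤ ∑ i ∈ Finset.range K1, b i :=
        Finset.single_le_sum (fun i _ => hb0 i) (Finset.mem_range.mpr h)
      have hCd : 0 ≤ C / d := by positivity
      calc (k : ℝ) * a k = b k := rfl
        _ ≤ ∑ i ∈ Finset.range K1, b i := this
        _ ≤ C / d + 1 + ∑ i ∈ Finset.range K1, b i := by linarith
    · have := hK1 k h
      calc (k : ℝ) * a k = b k := rfl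
        _ ≤ C / d + 1 := this
        _ ≤ C / d + 1 + ∑ i ∈ Finset.range K1, b i := by linarith
  · -- tendsto
    obtain ⟨K1, hK1⟩ := hev 1 one_pos
    apply squeeze_zero' (g := fun k : ℕ => (C / d + 1) * (1 / (k : ℝ)))
    · exact Eventually.of_forall ha
    · rw [eventually_atTop]
      refine ⟨max K1 1, ?_⟩
      intro k hk
      have hkK : K1 ≤ k := le_trans (le_max_left _ _) hk
      have hk1 : 1 ≤ k := le_trans (le_max_right _ _) hk
      have hk0 : (0 : ℝ) < k := by exact_mod_cast hk1
      have := hK1 k hkK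
      rw [mul_one_div, le_div_iff₀ hk0]
      calc a k * k = b k := by simp [hbdef]; ring
        _ ≤ C / d + 1 := this
    · have : Tendsto (fun k : ℕ => (C / d + 1) * (1 / (k : ℝ))) atTop (nhds ((C / d + 1) * 0)) :=
        Tendsto.const_mul _ tendsto_one_div_atTop_nhds_zero_nat
      simpa using this
end

section
/- Let (a_k) be nonnegative reals with a_{k+1} ≤ (1 - c/(k+1)) a_k + C/(k+1)² for all k, where 0 < c ≤ 1 and C > 0, and assume c/(k+1) ≤ 1 for all relevant k. Then a_k → 0 as k → ∞. -/
open Filter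

lemma tendsto_zero_of_contract (b d : ℕ → ℝ) (hb : ∀ k, 0 ≤ b k)
    (hd0 : ∀ k, 0 ≤ d k) (hrec : ∀ k, b (k + 1) ≤ (1 - d k) * b k)
    (hdiv : Tendsto (fun n => ∑ k ∈ Finset.range n, d k) atTop atTop) :
    Tendsto b atTop (nhds 0) := by
  have hanti : Antitone b := antitone_nat_of_succ_le fun k => by
    nlinarith [hrec k, hb k, hd0 k]
  have hbdd : BddBelow (Set.range b) := ⟨0, by rintro x ⟨k, rfl⟩; exact hb k⟩
  have hlim := tendsto_atTop_ciInf hanti hbdd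
  set L := ⨅ i, b i with hLdef
  have hL0 : 0 ≤ L := le_ciInf hb
  have hLle : ∀ k, L ≤ b k := fun k => ciInf_le hbdd k
  have key : ∀ n, b n ≤ b 0 - L * ∑ k ∈ Finset.range n, d k := by
    intro n
    induction n with
    | zero => simp
    | succ n ih =>
      rw [Finset.sum_range_succ]
      have h1 := hrec n
      have h2 := hLle n
      have h3 := hd0 n
      nlinarith [mul_le_mul_of_nonneg_left h2 h3]
  have hL : L = 0 := by
    by_contra h
    have hLpos : 0 < L := lt_of_le_of_ne hL0 (Ne.symm h)
    obtain ⟨n, hn⟩ := (hdiv.eventually_gt_atTop (b 0 / L)).exists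
    rw [div_lt_iff₀ hLpos] at hn
    nlinarith [key n, hb n]
  rw [hL] at hlim
  exact hlim

theorem recurrence_tendsto_zero (a : ℕ → ℝ) (c C : ℝ)
    (ha : ∀ k, 0 ≤ a k) (hc0 : 0 < c) (hc1 : c ≤ 1) (hC : 0 < C)
    (hstep : ∀ k : ℕ, c / (k + 1) ≤ 1)
    (hrec : ∀ k : ℕ, a (k + 1) ≤ (1 - c / (k + 1)) * a k + C / (k + 1) ^ 2) :
    Tendsto a atTop (nhds 0) := by
  rw [Metric.tendsto_atTop]
  intro ε hε
  set ε' := ε / 2 with hε'def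
  have hε' : 0 < ε' := by positivity
  obtain ⟨N, hN⟩ := exists_nat_ge (C / (ε' * c))
  -- the shifted, truncated sequence
  set b : ℕ → ℝ := fun k => max (a (N + k) - ε') 0 with hbdef
  set d : ℕ → ℝ := fun k => c / ((N : ℝ) + k + 1) with hddef
  have hb0 : ∀ k, 0 ≤ b k := fun k => le_max_right _ _
  have hdenpos : ∀ k : ℕ, (0 : ℝ) < (N : ℝ) + k + 1 := by
    intro k; positivity
  have hd0 : ∀ k, 0 ≤ d k := fun k => div_nonneg hc0.le (hdenpos k).le
  have hd1 : ∀ k, d k ≤ 1 := by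
    intro k
    have := hstep (N + k)
    simpa [hddef, add_assoc] using this
  have hCsmall : ∀ k : ℕ, C / ((N : ℝ) + k + 1) ≤ ε' * c := by
    intro k
    rw [div_le_iff₀ (hdenpos k)]
    have h1 : C / (ε' * c) ≤ (N : ℝ) + k + 1 := by
      have : (0 : ℝ) ≤ (k : ℝ) + 1 := by positivity
      linarith
    calc C = (ε' * c) * (C / (ε' * c)) := by field_simp
    _ ≤ (ε' * c) * ((N : ℝ) + k + 1) := by
        apply mul_le_mul_of_nonneg_left h1 (by positivity)
    _ = ε' * c * ((N : ℝ) + k + 1) := rfl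
  have hbrec : ∀ k, b (k + 1) ≤ (1 - d k) * b k := by
    intro k
    have h1 := hrec (N + k)
    have hcast : ((N + k : ℕ) : ℝ) + 1 = (N : ℝ) + k + 1 := by push_cast; ring
    rw [hcast] at h1
    have hfac : 0 ≤ 1 - d k := by linarith [hd1 k]
    apply max_le
    · have h2 : a (N + k) - ε' ≤ b k := le_max_left _ _
      have h3 := hCsmall k
      have h4 : C / ((N : ℝ) + k + 1) ^ 2 ≤ ε' * (c / ((N : ℝ) + k + 1)) := by
        rw [pow_two, div_mul_eq_div_div, ← mul_div_assoc]
        exact (div_le_div_iff_of_pos_right (hdenpos k)).mpr h3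
      have h5 : a (N + (k + 1)) = a (N + k + 1) := by ring_nf
      rw [h5]
      have h6 : d k = c / ((N : ℝ) + k + 1) := rfl
      nlinarith [mul_le_mul_of_nonneg_left h2 hfac]
    · positivity
  have hdiv : Tendsto (fun n => ∑ k ∈ Finset.range n, d k) atTop atTop := by
    have h1 : Tendsto (fun n : ℕ => ∑ k ∈ Finset.range n, (1 : ℝ) / ((N : ℝ) + k + 1))
        atTop atTop := by
      have h2 := Real.tendsto_sum_range_one_div_nat_succ_atTop.comp
        (tendsto_add_atTop_nat N)
      have h3 := tendsto_atTop_add_const_right atTop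
        (-(∑ i ∈ Finset.range N, (1 : ℝ) / (i + 1))) h2
      refine h3.congr fun n => ?_
      show (∑ i ∈ Finset.range (n + N), (1 : ℝ) / (↑i + 1)) +
          -(∑ i ∈ Finset.range N, (1 : ℝ) / (↑i + 1)) =
          ∑ k ∈ Finset.range n, (1 : ℝ) / ((N : ℝ) + ↑k + 1)
      rw [add_comm n N, Finset.sum_range_add,
        Finset.sum_congr rfl (fun k (_ : k ∈ Finset.range n) =>
          show (1 : ℝ) / (↑(N + k) + 1) = 1 / ((N : ℝ) + ↑k + 1) by push_cast; ring)]
      ring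
    have h4 := h1.const_mul_atTop hc0
    refine h4.congr fun n => ?_
    rw [Finset.mul_sum]
    exact Finset.sum_congr rfl fun k _ => by rw [mul_one_div]
  have hbzero := tendsto_zero_of_contract b d hb0 hd0 hbrec hdiv
  rw [Metric.tendsto_atTop] at hbzero
  obtain ⟨M, hM⟩ := hbzero ε' hε'
  refine ⟨N + M, fun n hn => ?_⟩
  have hn' : M ≤ n - N := by omega
  have hrepr : n = N + (n - N) := by omega
  have hbM := hM (n - N) hn'
  rw [Real.dist_eq, sub_zero] at hbM ⊢
  have h7 : a n - ε' ≤ b (n - N) :=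
    calc a n - ε' = a (N + (n - N)) - ε' := by rw [← hrepr]
    _ ≤ b (n - N) := le_max_left _ _
  have h8 : |b (n - N)| = b (n - N) := abs_of_nonneg (hb0 _)
  rw [h8] at hbM
  rw [abs_of_nonneg (ha n)]
  have : ε' + ε' = ε := by rw [hε'def]; ring
  linarith
end
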